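/- arXiv:2311.07000 — 3 statements merged into one kernel-verified Lean document; each statement's English description precedes it below -/
import Mathlib

section
/- Suppose u : ℝⁿ → ℝ is semiconcave with linear modulus and constant C, v : ℝⁿ → ℝ is semiconvex with the same constant C, u ≥ v everywhere, and let A = {x : u(x) = v(x)}. Then u and v are differentiable at every point of A with Du(x) = Dv(x) for all x ∈ A. -/
/-- `u` is semiconcave with linear modulus and constant `C` on `ℝⁿ`. -/
def Semiconcave {n : ℕ} (C : ℝ) (u : EuclideanSpace ℝ (Fin n) → ℝ) : Prop :=
  ∀ x y : EuclideanSpace ℝ (Fin n), ∀ lam ∈ Set.Icc (0:ℝ) 1,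
    lam * u x + (1 - lam) * u y - u (lam • x + (1 - lam) • y) ≤
      C / 2 * lam * (1 - lam) * ‖x - y‖ ^ 2

/-!
At a contact point `x`, semiconcavity of `u` yields a paraboloid `U ≥ u` touching `u` at `x`,
and semiconvexity of `v` a paraboloid `L ≤ v` touching `v` at `x`: their linear parts are
supergradients of the concave functions `u - C/2 ‖·‖²` and `-v - C/2 ‖·‖²`, obtained by
separating a point of the graph from the open strict hypograph. As `L ≤ v ≤ u ≤ U` with
equality at `x`, the function `U - L` has a minimum at `x`, so `U` and `L` have the same
derivative there, and `u`, `v` are squeezed between them.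
-/

open Set Filter Topology Asymptotics

section Supergradient

variable {E : Type*} [TopologicalSpace E] [AddCommGroup E] [IsTopologicalAddGroup E]
  [Module ℝ E] [ContinuousSMul ℝ E]

theorem ConcaveOn.exists_le_add_of_continuous {f : E → ℝ} (hf : ConcaveOn ℝ univ f)
    (hfc : Continuous f) (x : E) : ∃ ℓ : StrongDual ℝ E, ∀ y, f y ≤ f x + ℓ (y - x) := by
  set S : Set (E × ℝ) := {p | p.1 ∈ univ ∧ p.2 < f p.1}
  have hSopen : IsOpen S := by
    simpa [S] using isOpen_lt continuous_snd (hfc.comp continuous_fst)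
  obtain ⟨L, hL⟩ := geometric_hahn_banach_open_point hf.convex_strict_hypograph hSopen
    (by simp [S] : (x, f x) ∉ S)
  set ℓ := L.comp (.inl ℝ E ℝ)
  set c := L (0, 1)
  have hL_apply (y : E) (t : ℝ) : L (y, t) = ℓ y + t * c := by
    rw [show (y, t) = (y, 0) + t • ((0 : E), (1 : ℝ)) by ext <;> simp, map_add, map_smul,
      smul_eq_mul]
    rfl
  have hlt {y : E} {t : ℝ} (ht : t < f y) : ℓ y + t * c < ℓ x + f x * c := by
    simpa only [hL_apply] using hL (y, t) ⟨mem_univ y, ht⟩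
  have hc : 0 < c := by nlinarith [hlt (sub_one_lt (f x))]
  refine ⟨-c⁻¹ • ℓ, fun y => ?_⟩
  have hle : ℓ y + f y * c ≤ ℓ x + f x * c :=
    le_of_tendsto ((continuous_mul_const c).const_add (ℓ y)).continuousWithinAt
      (eventually_nhdsWithin_of_forall (s := Iio (f y)) fun t ht => (hlt ht).le)
  have hdiff : f y - f x ≤ c⁻¹ * (ℓ x - ℓ y) := by
    rw [← div_eq_inv_mul, le_div_iff₀ hc]; linarith
  simp only [FunLike.coe_smul, Pi.smul_apply, map_sub, smul_eq_mul]
  linarith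

end Supergradient

section NormedSpace

variable {E : Type*} [NormedAddCommGroup E] [NormedSpace ℝ E]

theorem HasFDerivAt.of_eventually_le_of_eventually_le {f l g : E → ℝ} {f' : StrongDual ℝ E}
    {x : E} (hl : HasFDerivAt l f' x) (hg : HasFDerivAt g f' x) (hlf : ∀ᶠ y in 𝓝 x, l y ≤ f y)
    (hfg : ∀ᶠ y in 𝓝 x, f y ≤ g y) (hlx : l x = f x) (hgx : g x = f x) :
    HasFDerivAt f f' x := by
  rw [hasFDerivAt_iff_isLittleO] at *
  refine IsBigO.trans_isLittleO
    (g := fun y => ‖l y - l x - f' (y - x)‖ + ‖g y - g x - f' (y - x)‖)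
    (IsBigO.of_bound' ?_) (hl.norm_left.add hg.norm_left)
  filter_upwards [hlf, hfg] with y hly hgy
  rw [hlx, hgx, Real.norm_of_nonneg (add_nonneg (norm_nonneg _) (norm_nonneg _))]
  simp only [Real.norm_eq_abs, abs_le]
  constructor <;> linarith [abs_nonneg (l y - f x - f' (y - x)),
    abs_nonneg (g y - f x - f' (y - x)), neg_abs_le (l y - f x - f' (y - x)),
    le_abs_self (g y - f x - f' (y - x))]

theorem hasFDerivAt_add_add_mul_norm_sub_sq (a c : ℝ) (ℓ : StrongDual ℝ E) (x : E) :
    HasFDerivAt (fun y => a + ℓ (y - x) + c * ‖y - x‖ ^ 2) ℓ x := by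
  have hsq : HasFDerivAt (fun y => ‖y - x‖ ^ 2) (0 : StrongDual ℝ E) x := by
    simpa [hasFDerivAt_iff_isLittleO] using isLittleO_pow_sub_sub x one_lt_two
  have hℓ : HasFDerivAt (fun y => ℓ (y - x)) ℓ x := by
    simpa using (ℓ.hasFDerivAt (x := x)).sub_const (ℓ x)
  exact (((hasFDerivAt_const a x).add hℓ).add (hsq.const_mul c)).congr_fderiv (by simp)

end NormedSpace

section Semiconcave

variable {n : ℕ} {C : ℝ} {u : EuclideanSpace ℝ (Fin n) → ℝ}

theorem Semiconcave.strongConcaveOn (hu : Semiconcave C u) : StrongConcaveOn univ (-C) u := by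
  refine ⟨convex_univ, fun x _ y _ a b ha hb hab => ?_⟩
  obtain rfl := eq_sub_of_add_eq' hab
  simp only [smul_eq_mul]
  linear_combination hu x y a ⟨ha, by linarith⟩

theorem Semiconcave.exists_le_add_add_mul_norm_sub_sq (hu : Semiconcave C u)
    (x : EuclideanSpace ℝ (Fin n)) :
    ∃ ℓ : StrongDual ℝ (EuclideanSpace ℝ (Fin n)),
      ∀ y, u y ≤ u x + ℓ (y - x) + C / 2 * ‖y - x‖ ^ 2 := by
  have hconc : ConcaveOn ℝ univ fun y => u y - C / 2 * ‖y‖ ^ 2 := by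
    simpa [neg_div, sub_eq_add_neg] using strongConcaveOn_iff_convex.mp hu.strongConcaveOn
  obtain ⟨ℓ, hℓ⟩ := hconc.exists_le_add_of_continuous hconc.locallyLipschitz.continuous x
  refine ⟨ℓ + C • innerSL ℝ x, fun y => ?_⟩
  have hnorm : ‖y‖ ^ 2 = ‖x‖ ^ 2 + 2 * inner ℝ x (y - x) + ‖y - x‖ ^ 2 := by
    rw [← norm_add_sq_real, add_sub_cancel]
  simp only [add_apply, FunLike.coe_smul, Pi.smul_apply, innerSL_apply_apply, smul_eq_mul]
  linear_combination hℓ y + C / 2 * hnorm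

end Semiconcave

theorem stmt1 {n : ℕ} (C : ℝ) (u v : EuclideanSpace ℝ (Fin n) → ℝ)
    (hu : Semiconcave C u) (hv : Semiconcave C (fun x => -v x))
    (huv : ∀ x, v x ≤ u x) (A : Set (EuclideanSpace ℝ (Fin n)))
    (hA : A = {x | u x = v x}) :
    ∀ x ∈ A, DifferentiableAt ℝ u x ∧ DifferentiableAt ℝ v x ∧
      gradient u x = gradient v x := by
  intro x hx
  rw [hA] at hx
  obtain ⟨ℓ, hℓ⟩ := hu.exists_le_add_add_mul_norm_sub_sq x
  obtain ⟨m, hm⟩ := hv.exists_le_add_add_mul_norm_sub_sq x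
  set U := fun y => u x + ℓ (y - x) + C / 2 * ‖y - x‖ ^ 2
  set L := fun y => v x + (-m) (y - x) + -(C / 2) * ‖y - x‖ ^ 2
  have hU : HasFDerivAt U ℓ x := hasFDerivAt_add_add_mul_norm_sub_sq _ _ _ _
  have hL : HasFDerivAt L (-m) x := hasFDerivAt_add_add_mul_norm_sub_sq _ _ _ _
  have hLv (y) : L y ≤ v y := by
    simp only [L, neg_apply]; linarith [hm y]
  have huU (y) : u y ≤ U y := hℓ y
  have hUx : U x = u x := by simp [U]
  have hLx : L x = v x := by simp [L]
  have hm_eq : -m = ℓ := by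
    have hmin : IsLocalMin (fun y => U y - L y) x := .of_forall fun y => by
      change U x - L x ≤ U y - L y
      linarith [hLv y, huv y, huU y, hx.out]
    exact (sub_eq_zero.mp (hmin.hasFDerivAt_eq_zero (hU.sub hL))).symm
  rw [hm_eq] at hL
  have hu' : HasFDerivAt u ℓ x :=
    hL.of_eventually_le_of_eventually_le hU (.of_forall fun y => (hLv y).trans (huv y))
      (.of_forall huU) (hLx.trans hx.out.symm) hUx
  have hv' : HasFDerivAt v ℓ x :=
    hL.of_eventually_le_of_eventually_le hU (.of_forall hLv)
      (.of_forall fun y => (huv y).trans (huU y)) hLx (hUx.trans hx.out)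
  exact ⟨hu'.differentiableAt, hv'.differentiableAt,
    by rw [gradient, gradient, hu'.fderiv, hv'.fderiv]⟩
end

section
/- Suppose u : ℝⁿ → ℝ is semiconcave with constant C, v : ℝⁿ → ℝ is semiconvex with constant C, u ≥ v, and A = {x : u(x) = v(x)}. Then the common gradient map x ↦ Du(x) = Dv(x) is Lipschitz on A with Lipschitz constant 4C, i.e. |Du(x₁) − Du(x₂)| ≤ 4C|x₁ − x₂| for all x₁, x₂ ∈ A. -/
open Set InnerProductSpace Asymptotics Topology Filter
open scoped RealInnerProductSpace

theorem ConvexOn.exists_subgradient {E : Type*} [NormedAddCommGroup E] [NormedSpace ℝ E]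
    {φ : E → ℝ} (hφ : ConvexOn ℝ univ φ) (hcont : Continuous φ) (x : E) :
    ∃ ℓ : StrongDual ℝ E, ∀ y, φ x + ℓ (y - x) ≤ φ y := by
  have hS_open : IsOpen {q : E × ℝ | q.1 ∈ univ ∧ φ q.1 < q.2} := by
    simpa only [mem_univ, true_and] using
      isOpen_lt (hcont.comp continuous_fst) continuous_snd (f := fun q : E × ℝ => φ q.1)
  -- Separate `(x, φ x)` from the open strict epigraph; the separating functional `f` is
  -- not vertical (`c > 0`), so its restriction to `E`, rescaled by `-1 / c`, is a subgradient.
  obtain ⟨f, hf⟩ := geometric_hahn_banach_point_open hφ.convex_strict_epigraph hS_open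
    (x := (x, φ x)) fun h => lt_irrefl _ h.2
  set g := f.comp (ContinuousLinearMap.inl ℝ E ℝ)
  set c := f (0, 1)
  have hf_apply : ∀ y t, f (y, t) = g y + t * c := fun y t => by
    have : ((y, t) : E × ℝ) = (y, 0) + t • (0, 1) := by simp
    rw [this, map_add, map_smul, smul_eq_mul]
    rfl
  have hsep : ∀ y t, φ y < t → g x + φ x * c < g y + t * c := fun y t ht => by
    simpa only [hf_apply] using hf (y, t) ⟨mem_univ y, ht⟩
  have hc : 0 < c := by nlinarith [hsep x (φ x + 1) (by linarith)]
  have hsupp : ∀ y, g x + φ x * c ≤ g y + φ y * c := fun y =>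
    le_of_forall_pos_lt_add fun ε hε => by
      have := hsep y (φ y + ε / c) (by linarith [div_pos hε hc])
      rwa [add_mul, div_mul_cancel₀ _ hc.ne', ← add_assoc] at this
  refine ⟨-c⁻¹ • g, fun y => ?_⟩
  have hcc : c⁻¹ * c = 1 := inv_mul_cancel₀ hc.ne'
  show φ x + -c⁻¹ * g (y - x) ≤ φ y
  rw [map_sub]
  linear_combination c⁻¹ * hsupp y + (φ y - φ x) * hcc

section InnerProductSpace

variable {E : Type*} [NormedAddCommGroup E] [InnerProductSpace ℝ E]

theorem norm_smul_add_one_sub_smul_sq (x y : E) (a : ℝ) :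
    ‖a • x + (1 - a) • y‖ ^ 2
      = a * ‖x‖ ^ 2 + (1 - a) * ‖y‖ ^ 2 - a * (1 - a) * ‖x - y‖ ^ 2 := by
  simp only [← real_inner_self_eq_norm_sq, inner_add_left, inner_add_right,
    inner_sub_left, inner_sub_right, real_inner_smul_left, real_inner_smul_right,
    real_inner_comm y x]
  ring

theorem eq_zero_of_inner_le_mul_norm_sq {w : E} {C : ℝ} (h : ∀ z, ⟪w, z⟫ ≤ C * ‖z‖ ^ 2) :
    w = 0 := by
  set t := (|C| + 1)⁻¹
  have ht : 0 < t := by positivity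
  have hCt : C * t < 1 := by
    calc C * t ≤ |C| * t := by gcongr; exact le_abs_self C
      _ < (|C| + 1) * t := by gcongr; exact lt_add_one _
      _ = 1 := mul_inv_cancel₀ (by positivity)
  have htw := h (t • w)
  rw [real_inner_smul_right, real_inner_self_eq_norm_sq, norm_smul, Real.norm_of_nonneg ht.le,
    mul_pow] at htw
  have : ‖w‖ ^ 2 ≤ 0 := by nlinarith [mul_pos ht (sub_pos.2 hCt)]
  simpa using this

def HasQuadraticBoundAt (f : E → ℝ) (C : ℝ) (p x : E) : Prop :=
  ∀ y, |f y - f x - ⟪p, y - x⟫| ≤ C / 2 * ‖y - x‖ ^ 2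

variable {f : E → ℝ} {C : ℝ} {p p₁ p₂ x x₁ x₂ : E}

theorem hasQuadraticBoundAt_of_le_of_le {q : E}
    (hlower : ∀ y, f x + ⟪q, y - x⟫ - C / 2 * ‖y - x‖ ^ 2 ≤ f y)
    (hupper : ∀ y, f y ≤ f x + ⟪p, y - x⟫ + C / 2 * ‖y - x‖ ^ 2) :
    HasQuadraticBoundAt f C p x := by
  obtain rfl : q = p := sub_eq_zero.1 <| eq_zero_of_inner_le_mul_norm_sq fun z => by
    have h₁ := hlower (x + z)
    have h₂ := hupper (x + z)
    rw [add_sub_cancel_left] at h₁ h₂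
    rw [inner_sub_left]
    linarith
  exact fun y => abs_le.2 ⟨by linarith [hlower y], by linarith [hupper y]⟩

namespace HasQuadraticBoundAt

theorem hasGradientAt [CompleteSpace E] (h : HasQuadraticBoundAt f C p x) :
    HasGradientAt f p x := by
  rw [hasGradientAt_iff_isLittleO]
  have hO : (fun y => f y - f x - ⟪p, y - x⟫) =O[𝓝 x] fun y => ‖y - x‖ ^ 2 :=
    IsBigO.of_bound (C / 2) <| Eventually.of_forall fun y => by
      simpa only [Real.norm_eq_abs, abs_pow, abs_norm] using h y
  exact hO.trans_isLittleO <| (isLittleO_norm_pow_id one_lt_two).comp_tendsto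
    (tendsto_sub_nhds_zero_iff.2 tendsto_id)

theorem mul_norm_sub_nonneg (h : HasQuadraticBoundAt f C p x) (y : E) :
    0 ≤ C * ‖y - x‖ := by
  rcases (norm_nonneg (y - x)).eq_or_lt with hyx | hyx
  · simp [← hyx]
  · have : 0 ≤ C * ‖y - x‖ * ‖y - x‖ := by
      nlinarith [abs_nonneg (f y - f x - ⟪p, y - x⟫), h y]
    exact nonneg_of_mul_nonneg_left this hyx

theorem inner_sub_le (h₁ : HasQuadraticBoundAt f C p₁ x₁) (h₂ : HasQuadraticBoundAt f C p₂ x₂)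
    (z : E) :
    ⟪p₁ - p₂, z⟫ ≤ C / 2 * (‖z‖ ^ 2 + ‖x₂ - x₁‖ ^ 2 + ‖x₂ - x₁ + z‖ ^ 2) := by
  have e₁ := (abs_le.1 (h₁ (x₂ + z))).1
  have e₂ := (abs_le.1 (h₂ (x₂ + z))).2
  have e₃ := (abs_le.1 (h₁ x₂)).2
  rw [add_sub_cancel_left] at e₂
  rw [show x₂ + z - x₁ = x₂ - x₁ + z by abel, inner_add_right] at e₁
  rw [inner_sub_left]
  linarith

theorem norm_sub_le (h₁ : HasQuadraticBoundAt f C p₁ x₁) (h₂ : HasQuadraticBoundAt f C p₂ x₂) :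
    ‖p₁ - p₂‖ ≤ 3 * C * ‖x₁ - x₂‖ := by
  rcases eq_or_ne x₁ x₂ with rfl | hx
  · have hp : p₁ - p₂ = 0 := eq_zero_of_inner_le_mul_norm_sq fun z => by
      have := h₁.inner_sub_le h₂ z
      rw [sub_self, zero_add, norm_zero] at this
      linear_combination this
    simp [hp]
  rcases eq_or_ne p₁ p₂ with rfl | hp
  · simpa [mul_assoc, norm_sub_rev] using h₁.mul_norm_sub_nonneg x₂
  set d := ‖x₁ - x₂‖
  have hd : 0 < d := norm_pos_iff.2 (sub_ne_zero.2 hx)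
  have hs : 0 < ‖p₁ - p₂‖ := norm_pos_iff.2 (sub_ne_zero.2 hp)
  set z := (d / ‖p₁ - p₂‖) • (p₁ - p₂)
  have hz : ‖z‖ = d := by
    rw [norm_smul, Real.norm_of_nonneg (by positivity), div_mul_cancel₀ _ hs.ne']
  have hx₂₁ : ‖x₂ - x₁‖ = d := norm_sub_rev _ _
  have hinner : ⟪p₁ - p₂, z⟫ = d * ‖p₁ - p₂‖ := by
    rw [real_inner_smul_right, real_inner_self_eq_norm_sq]
    field_simp
  have hsum : ‖x₂ - x₁ + z‖ ≤ 2 * d := by linarith [norm_add_le (x₂ - x₁) z]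
  have hC : 0 ≤ C := by nlinarith [h₁.mul_norm_sub_nonneg x₂]
  have key := h₁.inner_sub_le h₂ z
  rw [hinner, hz, hx₂₁] at key
  have : d * ‖p₁ - p₂‖ ≤ d * (3 * C * d) := by
    nlinarith [mul_le_mul hsum hsum (norm_nonneg _) (by positivity)]
  exact le_of_mul_le_mul_left this hd

end HasQuadraticBoundAt

end InnerProductSpace

namespace Semiconcave

variable {n : ℕ} {C : ℝ} {u v : EuclideanSpace ℝ (Fin n) → ℝ}

theorem convexOn_sub (hu : Semiconcave C u) :
    ConvexOn ℝ univ (fun y => C / 2 * ‖y‖ ^ 2 - u y) := by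
  refine ⟨convex_univ, fun x _ y _ a b ha hb hab => ?_⟩
  obtain rfl : b = 1 - a := by linarith
  have hx := hu x y a ⟨ha, by linarith⟩
  simp only [smul_eq_mul]
  rw [norm_smul_add_one_sub_smul_sq]
  nlinarith [hx]

theorem exists_le_add_inner (hu : Semiconcave C u) (x : EuclideanSpace ℝ (Fin n)) :
    ∃ r, ∀ y, u y ≤ u x + ⟪r, y - x⟫ + C / 2 * ‖y - x‖ ^ 2 := by
  have hφ := hu.convexOn_sub
  obtain ⟨ℓ, hℓ⟩ := hφ.exists_subgradient hφ.locallyLipschitz.continuous x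
  refine ⟨C • x - (toDual ℝ _).symm ℓ, fun y => ?_⟩
  have hsq : ‖y‖ ^ 2 = ‖x‖ ^ 2 + 2 * ⟪x, y - x⟫ + ‖y - x‖ ^ 2 := by
    simpa using norm_add_sq_real x (y - x)
  rw [inner_sub_left, real_inner_smul_left, toDual_symm_apply]
  linear_combination hℓ y + C / 2 * hsq

theorem exists_hasQuadraticBoundAt (hu : Semiconcave C u) (hv : Semiconcave C (fun x => -v x))
    (huv : ∀ x, v x ≤ u x) {x : EuclideanSpace ℝ (Fin n)} (hx : u x = v x) :
    ∃ p, HasQuadraticBoundAt u C p x := by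
  obtain ⟨r, hr⟩ := hu.exists_le_add_inner x
  obtain ⟨q, hq⟩ := hv.exists_le_add_inner x
  refine ⟨r, hasQuadraticBoundAt_of_le_of_le (q := -q) (fun y => ?_) hr⟩
  rw [inner_neg_left]
  linarith [hq y, huv y]

end Semiconcave

theorem stmt2 {n : ℕ} (C : ℝ) (u v : EuclideanSpace ℝ (Fin n) → ℝ)
    (hu : Semiconcave C u) (hv : Semiconcave C (fun x => -v x))
    (huv : ∀ x, v x ≤ u x) (A : Set (EuclideanSpace ℝ (Fin n)))
    (hA : A = {x | u x = v x}) :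
    ∀ x₁ ∈ A, ∀ x₂ ∈ A,
      ‖gradient u x₁ - gradient u x₂‖ ≤ 4 * C * ‖x₁ - x₂‖ := by
  subst hA
  intro x₁ hx₁ x₂ hx₂
  obtain ⟨p₁, h₁⟩ := hu.exists_hasQuadraticBoundAt hv huv hx₁
  obtain ⟨p₂, h₂⟩ := hu.exists_hasQuadraticBoundAt hv huv hx₂
  rw [h₁.hasGradientAt.gradient, h₂.hasGradientAt.gradient]
  have hC := h₂.mul_norm_sub_nonneg x₁
  linarith [h₁.norm_sub_le h₂]
end

section
/- Let M be a compact metric space and T⁻_t, T⁺_t Lax–Oleinik operators from a continuous cost with the semigroup property. If φ : M → ℝ is bounded and T⁻_t(T⁺_t φ) = φ for some t = t₂ > 0, then T⁻_t(T⁺_t φ) = φ for all t ∈ [0, t₂]. -/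
/-- The positive abstract Lax–Oleinik operator, with `T⁺_0 = Id`. -/
noncomputable def Tplus {M : Type*} (c : ℝ → M → M → ℝ) (t : ℝ) (φ : M → ℝ) (x : M) : ℝ :=
  if t = 0 then φ x else ⨆ y, (φ y - c t x y)

/-- The negative abstract Lax–Oleinik operator, with `T⁻_0 = Id`. -/
noncomputable def Tminus {M : Type*} (c : ℝ → M → M → ℝ) (t : ℝ) (φ : M → ℝ) (x : M) : ℝ :=
  if t = 0 then φ x else ⨅ y, (φ y + c t y x)

/-- The cost `c` is continuous and satisfies the semigroup (Chapman–Kolmogorov) relation. -/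
structure CostSemigroup {M : Type*} [MetricSpace M] (c : ℝ → M → M → ℝ) : Prop where
  cont : Continuous (fun q : ℝ × M × M => c q.1 q.2.1 q.2.2)
  semigroup : ∀ t s : ℝ, 0 < t → 0 < s → ∀ x y : M,
    c (t + s) x y = ⨅ z, (c t x z + c s z y)

private lemma cost_bdd {M : Type*} [MetricSpace M] [CompactSpace M] [Nonempty M]
    {c : ℝ → M → M → ℝ} (hc : CostSemigroup c) (t : ℝ) :
    ∃ C, ∀ x y : M, |c t x y| ≤ C := by
  have hcont : Continuous fun p : M × M => |c t p.1 p.2| := by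
    have h1 : Continuous fun p : M × M => c t p.1 p.2 :=
      hc.cont.comp (continuous_const.prodMk continuous_id)
    exact h1.abs
  obtain ⟨p₀, -, hp⟩ := isCompact_univ.exists_isMaxOn Set.univ_nonempty hcont.continuousOn
  exact ⟨|c t p₀.1 p₀.2|, fun x y => hp (Set.mem_univ (x, y))⟩

theorem stmt8 {M : Type*} [MetricSpace M] [CompactSpace M] [Nonempty M]
    (c : ℝ → M → M → ℝ) (hc : CostSemigroup c)
    (φ : M → ℝ) (hφ : ∃ K, ∀ x, |φ x| ≤ K) (t₂ : ℝ) (ht₂ : 0 < t₂)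
    (h : Tminus c t₂ (Tplus c t₂ φ) = φ) :
    ∀ t ∈ Set.Icc (0:ℝ) t₂, Tminus c t (Tplus c t φ) = φ := by
  obtain ⟨K, hK⟩ := hφ
  rintro t ⟨ht0, htle⟩
  rcases eq_or_lt_of_le ht0 with h0 | ht0
  · subst h0; funext x; simp [Tminus, Tplus]
  rcases eq_or_lt_of_le htle with h2 | htlt
  · subst h2; exact h
  have ht : t ≠ 0 := ne_of_gt ht0
  have ht₂' : t₂ ≠ 0 := ne_of_gt ht₂
  set s := t₂ - t with hs_def
  have hs : 0 < s := by simp only [hs_def]; linarith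
  have hst : s + t = t₂ := by simp only [hs_def]; ring
  obtain ⟨Ct, hCt⟩ := cost_bdd hc t
  obtain ⟨Cs, hCs⟩ := cost_bdd hc s
  obtain ⟨C₂, hC₂⟩ := cost_bdd hc t₂
  -- bddAbove for the sup families defining Tplus
  have bddA : ∀ (t' C' : ℝ), (∀ x y : M, |c t' x y| ≤ C') → ∀ w : M,
      BddAbove (Set.range fun z => φ z - c t' w z) := by
    intro t' C' hC' w
    refine ⟨K + C', ?_⟩
    rintro _ ⟨z, rfl⟩
    have h1 := (abs_le.mp (hK z)).2
    have h2 := (abs_le.mp (hC' w z)).1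
    dsimp; linarith
  have bddAt := bddA t Ct hCt
  have bddAt₂ := bddA t₂ C₂ hC₂
  -- Tplus values for nonzero times
  have Tplus_eq : ∀ (t' : ℝ), t' ≠ 0 → ∀ w : M,
      Tplus c t' φ w = ⨆ z, (φ z - c t' w z) := by
    intro t' ht' w; simp [Tplus, ht']
  -- lower bound on Tplus c t φ
  have Tplus_lb : ∀ w : M, -K - Ct ≤ Tplus c t φ w := by
    intro w
    rw [Tplus_eq t ht w]
    have h1 : φ w - c t w w ≤ ⨆ z, (φ z - c t w z) := le_ciSup (bddAt w) w
    have h2 := (abs_le.mp (hK w)).1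
    have h3 := (abs_le.mp (hCt w w)).2
    linarith
  -- bddBelow for the inf family of Tminus c t (Tplus c t φ)
  have bddB : ∀ x : M, BddBelow (Set.range fun w => Tplus c t φ w + c t w x) := by
    intro x
    refine ⟨-K - Ct - Ct, ?_⟩
    rintro _ ⟨w, rfl⟩
    have h1 := Tplus_lb w
    have h2 := (abs_le.mp (hCt w x)).1
    dsimp; linarith
  funext x
  have Tm_eq : Tminus c t (Tplus c t φ) x = ⨅ w, (Tplus c t φ w + c t w x) := by
    simp [Tminus, ht]
  apply le_antisymm
  · -- Tminus c t (Tplus c t φ) x ≤ φ x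
    have hx : Tminus c t₂ (Tplus c t₂ φ) x = φ x := congrFun h x
    rw [← hx]
    have Tm₂_eq : Tminus c t₂ (Tplus c t₂ φ) x = ⨅ y, (Tplus c t₂ φ y + c t₂ y x) := by
      simp [Tminus, ht₂']
    rw [Tm₂_eq, Tm_eq]
    apply le_ciInf
    intro y
    -- decompose c t₂ y x
    have hdec : c t₂ y x = ⨅ w, (c s y w + c t w x) := by
      rw [← hst]; exact hc.semigroup s t hs ht0 y x
    rw [hdec]
    have key : ∀ w : M,
        (⨅ w', (Tplus c t φ w' + c t w' x)) - Tplus c t₂ φ y ≤ c s y w + c t w x := by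
      intro w
      have h1 : (⨅ w', (Tplus c t φ w' + c t w' x)) ≤ Tplus c t φ w + c t w x :=
        ciInf_le (bddB x) w
      have h2 : Tplus c t φ w ≤ Tplus c t₂ φ y + c s y w := by
        rw [Tplus_eq t ht w]
        apply ciSup_le
        intro z
        have h3 : φ z - c t₂ y z ≤ Tplus c t₂ φ y := by
          rw [Tplus_eq t₂ ht₂' y]; exact le_ciSup (bddAt₂ y) z
        have h4 : c t₂ y z ≤ c s y w + c t w z := by
          have hdec2 : c t₂ y z = ⨅ w', (c s y w' + c t w' z) := by
            rw [← hst]; exact hc.semigroup s t hs ht0 y z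
          rw [hdec2]
          refine ciInf_le ⟨-Cs - Ct, ?_⟩ w
          rintro _ ⟨w', rfl⟩
          have h5 := (abs_le.mp (hCs y w')).1
          have h6 := (abs_le.mp (hCt w' z)).1
          dsimp; linarith
        linarith
      linarith
    have h7 : (⨅ w', (Tplus c t φ w' + c t w' x)) - Tplus c t₂ φ y
        ≤ ⨅ w, (c s y w + c t w x) := le_ciInf key
    linarith
  · -- φ x ≤ Tminus c t (Tplus c t φ) x
    rw [Tm_eq]
    apply le_ciInf
    intro w
    have h1 : φ x - c t w x ≤ Tplus c t φ w := by
      rw [Tplus_eq t ht w]; exact le_ciSup (bddAt w) x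
    linarith
end
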